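/- Let C be a diagonally neighbour transitive code in H(m,q). Then either C is a frequency permutation array (a constant composition code in which every letter of the alphabet occurs exactly m/q times in each codeword); or C = {(a,…,a)} for a single letter a; or C is one of Rep(m,q), Inj(m,q) (with m < q), or W([m/2],2) (with q = 2 and m ≥ 3 odd), none of which is a constant composition code. -/

import Mathlib

open Equiv Pointwise

section HammingDefs

variable {I : Type*} [Fintype I] [DecidableEq I] {q : ℕ}

/-- The permutation of the vertex set of the Hamming graph `H(I,q)` induced by the
letter permutations `g i` (acting coordinatewise) followed by the coordinate
permutation `σ`:  `(α^x)_i = g_{σ⁻¹ i} (α_{σ⁻¹ i})`. -/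
def tvp (g : I → Equiv.Perm (Fin q)) (σ : Equiv.Perm I) : Equiv.Perm (I → Fin q) where
  toFun α i := g (σ⁻¹ i) (α (σ⁻¹ i))
  invFun β i := (g i)⁻¹ (β (σ i))
  left_inv α := by funext i; simp
  right_inv β := by funext i; simp

/-- The automorphism group of the Hamming graph `H(I,q)`: all permutations of the
vertex set preserving adjacency (Hamming distance 1). -/
def autH (I : Type*) [Fintype I] [DecidableEq I] (q : ℕ) :
    Subgroup (Equiv.Perm (I → Fin q)) where
  carrier := {y | ∀ α β : I → Fin q, hammingDist (y α) (y β) = 1 ↔ hammingDist α β = 1}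
  one_mem' := by intro α β; simp
  mul_mem' := by
    intro a b ha hb α β
    rw [Equiv.Perm.mul_apply, Equiv.Perm.mul_apply, ha, hb]
  inv_mem' := by
    intro a ha α β
    simpa using (ha (a⁻¹ α) (a⁻¹ β)).symm

/-- The homomorphism `S_q × S_I → Sym(V(H(I,q)))` whose image is `Diag(S_q) ⋊ L`. -/
def diagLHom (I : Type*) [Fintype I] [DecidableEq I] (q : ℕ) :
    Equiv.Perm (Fin q) × Equiv.Perm I →* Equiv.Perm (I → Fin q) where
  toFun x := tvp (fun _ => x.1) x.2
  map_one' := by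
    ext α i
    simp [tvp]
  map_mul' x y := by
    ext α i
    simp [tvp, mul_inv_rev]

/-- The subgroup `Diag_I(S_q) ⋊ L` of the automorphism group of `H(I,q)`. -/
def diagL (I : Type*) [Fintype I] [DecidableEq I] (q : ℕ) :
    Subgroup (Equiv.Perm (I → Fin q)) :=
  (diagLHom I q).range

/-- The subgroup `L` of pure coordinate permutations of `H(I,q)`. -/
def permL (I : Type*) [Fintype I] [DecidableEq I] (q : ℕ) :
    Subgroup (Equiv.Perm (I → Fin q)) :=
  ((diagLHom I q).comp (MonoidHom.inr (Equiv.Perm (Fin q)) (Equiv.Perm I))).range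

/-- Distance from a vertex to a code. -/
noncomputable def distC (γ : I → Fin q) (C : Set (I → Fin q)) : ℕ :=
  sInf {d | ∃ β ∈ C, hammingDist γ β = d}

/-- The cell `C_i` of the distance partition of the code `C`. -/
def cell (C : Set (I → Fin q)) (i : ℕ) : Set (I → Fin q) :=
  {γ | distC γ C = i}

/-- The covering radius of the code `C`. -/
noncomputable def covRad (C : Set (I → Fin q)) : ℕ :=
  sSup {d | ∃ γ : I → Fin q, distC γ C = d}

/-- The minimum distance of the code `C`. -/
noncomputable def minDist (C : Set (I → Fin q)) : ℕ :=
  sInf {d | ∃ β ∈ C, ∃ γ ∈ C, β ≠ γ ∧ hammingDist β γ = d}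

/-- `S` is an orbit of the subgroup `X` of permutations of the vertex set. -/
def IsOrbitOf (X : Subgroup (Equiv.Perm (I → Fin q))) (S : Set (I → Fin q)) : Prop :=
  ∃ v, S = {w | ∃ x ∈ X, x v = w}

/-- `C` is `X`-neighbour transitive: `X` is a group of automorphisms of the Hamming
graph, and both `C` and its set of neighbours `C_1` are `X`-orbits. -/
def NbrTransitive (X : Subgroup (Equiv.Perm (I → Fin q))) (C : Set (I → Fin q)) : Prop :=
  X ≤ autH I q ∧ IsOrbitOf X C ∧ IsOrbitOf X (cell C 1)

/-- `C` is `X`-completely transitive: every cell of the distance partition is an `X`-orbit. -/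
def ComplTransitive (X : Subgroup (Equiv.Perm (I → Fin q))) (C : Set (I → Fin q)) : Prop :=
  X ≤ autH I q ∧ ∀ i ≤ covRad C, IsOrbitOf X (cell C i)

/-- `C` is diagonally `X`-neighbour transitive. -/
def DiagNbrTransitive (X : Subgroup (Equiv.Perm (I → Fin q))) (C : Set (I → Fin q)) : Prop :=
  NbrTransitive X C ∧ X ≤ diagL I q

/-- The automorphism group of the code `C`: the setwise stabiliser of `C` in the
automorphism group of the Hamming graph. -/
def autCode (C : Set (I → Fin q)) : Subgroup (Equiv.Perm (I → Fin q)) :=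
  autH I q ⊓ MulAction.stabilizer (Equiv.Perm (I → Fin q)) C

/-- Number of occurrences of the letter `a` in the vertex `α`. -/
def cnt (α : I → Fin q) (a : Fin q) : ℕ :=
  (Finset.univ.filter fun i => α i = a).card

/-- The composition `Q(α)` of a vertex: the set of pairs `(a, p)` such that the letter `a`
occurs exactly `p > 0` times in `α`. -/
def compOf (α : I → Fin q) : Set (Fin q × ℕ) :=
  {x | 0 < x.2 ∧ cnt α x.1 = x.2}

/-- `Num(α)`: the set of pairs `(p, s)` such that exactly `s > 0` distinct letters occur
exactly `p > 0` times in `α`. -/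
def numOf (α : I → Fin q) : Set (ℕ × ℕ) :=
  {x | 0 < x.1 ∧ 0 < x.2 ∧ (Finset.univ.filter fun a => cnt α a = x.1).card = x.2}

/-- The repetition code `Rep(I,q)`. -/
def repCode (I : Type*) [Fintype I] [DecidableEq I] (q : ℕ) : Set (I → Fin q) :=
  {α | ∃ a, α = fun _ => a}

/-- The injection code `Inj(I,q)`: all tuples with pairwise distinct entries. -/
def injCode (I : Type*) [Fintype I] [DecidableEq I] (q : ℕ) : Set (I → Fin q) :=
  {α | Function.Injective α}

/-- The code `All(pq,q)`: all vertices in which every letter occurs exactly `p` times. -/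
def allCode (I : Type*) [Fintype I] [DecidableEq I] (q p : ℕ) : Set (I → Fin q) :=
  {α | ∀ a, cnt α a = p}

/-- `C` is `s`-regular. -/
def RegularUpTo (C : Set (I → Fin q)) (s : ℕ) : Prop :=
  ∀ i ≤ s, ∀ γ ∈ cell C i, ∀ γ' ∈ cell C i, ∀ k : ℕ,
    {β ∈ C | hammingDist γ β = k}.ncard = {β ∈ C | hammingDist γ' β = k}.ncard

/-- `C` is completely regular. -/
def ComplRegular (C : Set (I → Fin q)) : Prop :=
  RegularUpTo C (covRad C)

/-- `C` is a constant composition code: every letter occurs the same positive number of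
times in every codeword. -/
def IsCCC (C : Set (I → Fin q)) : Prop :=
  C.Nonempty ∧ ∃ f : Fin q → ℕ, (∀ a, 0 < f a) ∧ ∀ β ∈ C, ∀ a, cnt β a = f a

end HammingDefs

section Weight

/-- The weight of a binary vertex: number of nonzero entries. -/
def wt {m : ℕ} (α : Fin m → Fin 2) : ℕ :=
  (Finset.univ.filter fun i => α i ≠ 0).card

/-- The code `W([m/2],2)`: binary `m`-tuples of weight `(m+1)/2` or `(m-1)/2`. -/
def wCode (m : ℕ) : Set (Fin m → Fin 2) :=
  {α | wt α = (m+1)/2 ∨ wt α = (m-1)/2}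

/-- The code `W([m/2],2)` over a general alphabet (used when `q = 2`): vertices in which
one letter occurs `(m+1)/2` times and another `(m-1)/2` times. -/
def wCodeGen (m q : ℕ) : Set (Fin m → Fin q) :=
  {α | ∃ a b : Fin q, a ≠ b ∧ cnt α a = (m+1)/2 ∧ cnt α b = (m-1)/2}

end Weight

section PermCodes

/-- The vertex `α(g) = (1^g, …, q^g)` of `H(q,q)` associated with a permutation `g`. -/
def alphaVtx {q : ℕ} (g : Equiv.Perm (Fin q)) : Fin q → Fin q := fun i => g i

/-- The permutation code generated by a set `T` of permutations. -/
def permCode {q : ℕ} (T : Set (Equiv.Perm (Fin q))) : Set (Fin q → Fin q) :=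
  alphaVtx '' T

end PermCodes

section Repetition

variable {I : Type*} [Fintype I] [DecidableEq I] {q : ℕ}

/-- The `p`-fold repetition `rep_p(α) = (α,…,α)`, a vertex of `H(p·|I|, q)`. -/
def repv (p : ℕ) (α : I → Fin q) : Fin p × I → Fin q := fun ji => α ji.2

/-- The `p`-fold repetition code `Rep_p(C)`. -/
def repCodeP (p : ℕ) (C : Set (I → Fin q)) : Set (Fin p × I → Fin q) :=
  repv p '' C

/-- The homomorphism `Sym(V(H(I,q))) × S_p → Sym(V(H(p·|I|,q)))`: the pair `(x,σ)` acts on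
`p`-tuples of vertices by `(α_1,…,α_p) ↦ (α_{σ⁻¹(1)}^x, …, α_{σ⁻¹(p)}^x)`. -/
def repHom (p : ℕ) (I : Type*) [Fintype I] [DecidableEq I] (q : ℕ) :
    Equiv.Perm (I → Fin q) × Equiv.Perm (Fin p) →* Equiv.Perm (Fin p × I → Fin q) where
  toFun x :=
    { toFun := fun β ji => x.1 (fun i => β (x.2⁻¹ ji.1, i)) ji.2
      invFun := fun β ji => x.1⁻¹ (fun i => β (x.2 ji.1, i)) ji.2
      left_inv := by intro β; funext ji; simp
      right_inv := by intro β; funext ji; simp }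
  map_one' := by ext β ji; simp
  map_mul' x y := by ext β ji; simp [mul_inv_rev]

end Repetition

/-!
Elements of `Diag(S_q) ⋊ L` preserve the profile of a word: for each `w`, the number of letters
occurring exactly `w` times (the paper's `Num`). Hence all codewords share one profile, and all
vertices of `C₁` share one profile. Changing one coordinate of a codeword `α` moves an occurrence
from a letter of multiplicity `x` to one of multiplicity `y`; unless `x = y + 1` this changes the
profile, so the new word lies in `C₁`, and any two such moves change the profile in the same way.
Comparing well-chosen moves shows: if `α` is neither constant nor injective, it uses every letter
and its multiplicities are `p` or `p + 1`; if both values occur, each is taken by a single letter,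
so `q = 2` and `m = 2p + 1`.

For `Inj(m,q)` and `W([m/2],2)` membership is decided by the profile and some neighbour of `α`
lies outside the code, so every single-coordinate change of a codeword that stays in the code
stays in `C`; both codes are connected by such changes, whence `C` is all of it.

`X` maps constant words to constant words. If `C` contains `(a,…,a)` and `(a₁,…,a₁)` with
`a ≠ a₁`, then for each letter `t` the neighbour of `(a,…,a)` with one entry `t` lies in `C₁`.
An element of `X` taking it to the neighbour with entry `a₁` sends `(t,…,t)` to `(a,…,a)` or to
`(a₁,…,a₁)`, so `(t,…,t) ∈ C` and `C = Rep(m,q)`.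
-/

open Finset Function

theorem Function.Injective.update_of_forall_ne {α β : Type*} [DecidableEq α] {f : α → β}
    (hf : Injective f) (a : α) {b : β} (hb : ∀ x, f x ≠ b) : Injective (update f a b) := by
  intro x y h
  by_cases hx : x = a <;> by_cases hy : y = a
  · exact hx.trans hy.symm
  · rw [hx, update_self, update_of_ne hy] at h
    exact absurd h.symm (hb y)
  · rw [hy, update_self, update_of_ne hx] at h
    exact absurd h (hb x)
  · rw [update_of_ne hx, update_of_ne hy] at h
    exact hf h

section Counting

variable {I : Type*} [Fintype I] {q : ℕ}

/-- For `w, s > 0`: `(w, s) ∈ numOf α ↔ letterProfile α w = s`. -/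
def letterProfile (α : I → Fin q) (w : ℕ) : ℕ := #{a | cnt α a = w}

theorem cnt_pos_iff {α : I → Fin q} {a : Fin q} : 0 < cnt α a ↔ ∃ i, α i = a := by
  simp [cnt, Finset.card_pos, Finset.filter_nonempty_iff]

theorem sum_cnt (α : I → Fin q) : ∑ a, cnt α a = Fintype.card I :=
  (card_eq_sum_card_fiberwise fun i _ => mem_univ (α i)).symm

theorem injective_iff_cnt_le_one {α : I → Fin q} : Injective α ↔ ∀ a, cnt α a ≤ 1 := by
  simp only [cnt, Finset.card_le_one, mem_filter, mem_univ, true_and]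
  exact ⟨fun h a i hi j hj => h (hi.trans hj.symm), fun h i j hij => h _ i hij j rfl⟩

theorem letterProfile_pos_iff {α : I → Fin q} {w : ℕ} :
    0 < letterProfile α w ↔ ∃ a, cnt α a = w := by
  simp [letterProfile, Finset.card_pos, Finset.filter_nonempty_iff]

theorem injective_iff_letterProfile {α : I → Fin q} :
    Injective α ↔ ∀ w, 2 ≤ w → letterProfile α w = 0 := by
  rw [injective_iff_cnt_le_one]
  refine ⟨fun h w hw => Nat.eq_zero_of_not_pos fun hpos => ?_, fun h a => ?_⟩
  · obtain ⟨a, rfl⟩ := letterProfile_pos_iff.1 hpos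
    exact absurd (h a) (by omega)
  · by_contra! ha
    exact (letterProfile_pos_iff.2 ⟨a, rfl⟩).ne' (h _ ha)

theorem cnt_perm_comp (h : Perm (Fin q)) (α : I → Fin q) (a : Fin q) :
    cnt (h ∘ α) a = cnt α (h⁻¹ a) := by
  simp only [cnt, comp_apply, ← Perm.eq_inv_iff_eq]

theorem cnt_comp_perm (σ : Perm I) (α : I → Fin q) (a : Fin q) : cnt (α ∘ σ) a = cnt α a :=
  card_equiv σ (by simp)

theorem letterProfile_perm_comp (h : Perm (Fin q)) (α : I → Fin q) :
    letterProfile (h ∘ α) = letterProfile α := by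
  ext w
  exact card_equiv h⁻¹ (by simp [cnt_perm_comp])

theorem letterProfile_comp_perm (σ : Perm I) (α : I → Fin q) :
    letterProfile (α ∘ σ) = letterProfile α := by
  ext w
  simp only [letterProfile, cnt_comp_perm]

theorem letterProfile_diagLHom [DecidableEq I] (g : Perm (Fin q) × Perm I) (α : I → Fin q) :
    letterProfile (diagLHom I q g α) = letterProfile α :=
  (letterProfile_comp_perm g.2⁻¹ (g.1 ∘ α)).trans (letterProfile_perm_comp g.1 α)

theorem card_lt_of_injective_of_cnt_ne_one {α : I → Fin q} (hinj : Injective α) {z : Fin q}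
    (hz : cnt α z ≠ 1) : Fintype.card I < q := by
  refine (Fintype.card_lt_of_injective_not_surjective α hinj fun hs => hz ?_).trans_eq
    (Fintype.card_fin q)
  exact le_antisymm (injective_iff_cnt_le_one.1 hinj z) (cnt_pos_iff.2 (hs z))

theorem exists_forall_ne_of_card_lt (hmq : Fintype.card I < q) (γ : I → Fin q) :
    ∃ c, ∀ j, γ j ≠ c := by
  by_contra! h
  simpa using (Fintype.card_le_of_surjective γ h).trans_lt hmq

variable [DecidableEq I]

theorem cnt_update_add (α : I → Fin q) (i : I) (b a : Fin q) :
    cnt (update α i b) a + (if α i = a then 1 else 0) = cnt α a + (if b = a then 1 else 0) := by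
  simp only [cnt, card_filter]
  rw [sum_congr rfl fun j _ => apply_update (fun _ c => if c = a then 1 else 0) α i b j,
    sum_update_of_mem (mem_univ i), ← add_sum_erase _ _ (mem_univ i), sdiff_singleton_eq_erase]
  ring

theorem letterProfile_update {α : I → Fin q} {i : I} {b : Fin q} (hb : b ≠ α i) (w : ℕ) :
    letterProfile (update α i b) w + (if cnt α (α i) = w then 1 else 0)
        + (if cnt α b = w then 1 else 0) =
      letterProfile α w + (if cnt α (α i) - 1 = w then 1 else 0)
        + (if cnt α b + 1 = w then 1 else 0) := by
  have hsplit (β : I → Fin q) : letterProfile β w =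
      ∑ a ∈ univ \ {α i, b}, (if cnt β a = w then 1 else 0)
        + ((if cnt β (α i) = w then 1 else 0) + (if cnt β b = w then 1 else 0)) := by
    rw [letterProfile, card_filter, ← sum_sdiff (subset_univ {α i, b}), sum_pair hb.symm]
  have hrest : ∀ a ∈ univ \ {α i, b}, cnt (update α i b) a = cnt α a := fun a ha => by
    simp only [mem_sdiff, mem_univ, mem_insert, mem_singleton, true_and, not_or] at ha
    simpa [Ne.symm ha.1, Ne.symm ha.2] using cnt_update_add α i b a
  have hi : cnt (update α i b) (α i) + 1 = cnt α (α i) := by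
    simpa [hb] using cnt_update_add α i b (α i)
  have hb' : cnt (update α i b) b = cnt α b + 1 := by
    simpa [hb.symm] using cnt_update_add α i b b
  rw [hsplit, hsplit, sum_congr rfl fun a ha => by rw [hrest a ha], hb',
    show cnt (update α i b) (α i) = cnt α (α i) - 1 by omega]
  ring

end Counting

section HammingSteps

variable {I : Type*} [Fintype I] {q : ℕ}

theorem exists_ne_apply_eq_of_cnt_le {γ β : I → Fin q} {a : Fin q} (hcnt : cnt β a ≤ cnt γ a)
    {i : I} (hi : γ i ≠ β i) (hβi : β i = a) : ∃ j, γ j ≠ β j ∧ γ j = a := by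
  by_contra! hcon
  have hsub : (univ.filter fun j => γ j = a) ⊂ univ.filter fun j => β j = a := by
    refine (ssubset_iff_of_subset fun j => ?_).2 ⟨i, by simpa using hβi, by simpa using hcon i hi⟩
    simp only [mem_filter, mem_univ, true_and]
    exact fun hj => by_contra fun hne => hcon j (fun e => hne (e ▸ hj)) hj
  exact (card_lt_card hsub).not_ge hcnt

theorem subset_of_exists_hammingDist_lt {C P : Set (I → Fin q)} {γ₀ : I → Fin q} (h₀ : γ₀ ∈ C)
    (hstep : ∀ γ ∈ C, ∀ β ∈ P, γ ≠ β → ∃ γ' ∈ C, hammingDist γ' β < hammingDist γ β) :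
    P ⊆ C := by
  intro β hβ
  induction hd : hammingDist γ₀ β using Nat.strong_induction_on generalizing γ₀ with
  | _ n ih =>
    by_cases h : γ₀ = β
    · exact h ▸ h₀
    obtain ⟨γ', hγ', hlt⟩ := hstep γ₀ h₀ β hβ h
    exact ih _ (hd ▸ hlt) hγ' rfl

variable [DecidableEq I]

theorem hammingDist_update_le {γ β : I → Fin q} {i : I} (h : γ i ≠ β i)
    (c : Fin q) : hammingDist (update γ i c) β ≤ hammingDist γ β := by
  refine card_le_card fun j => ?_
  rcases eq_or_ne j i with rfl | hj <;> simp_all [update_of_ne]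

theorem hammingDist_update_lt {γ β : I → Fin q} {i : I} (h : γ i ≠ β i) :
    hammingDist (update γ i (β i)) β < hammingDist γ β := by
  refine card_lt_card ((ssubset_iff_of_subset fun j => ?_).2 ⟨i, by simpa using h, by simp⟩)
  rcases eq_or_ne j i with rfl | hj <;> simp_all [update_of_ne]

theorem injCode_subset {C : Set (I → Fin q)} (hmq : Fintype.card I < q) {γ₀ : I → Fin q}
    (h₀ : γ₀ ∈ C) (hC : C ⊆ injCode I q)
    (hcl : ∀ γ ∈ C, ∀ i b, Injective (update γ i b) → update γ i b ∈ C) :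
    injCode I q ⊆ C := by
  refine subset_of_exists_hammingDist_lt h₀ fun γ hγ β hβ hne => ?_
  have hfresh : ∀ γ ∈ C, ∀ i, (∀ j, γ j ≠ β i) →
      ∃ γ' ∈ C, hammingDist γ' β < hammingDist γ β := fun γ hγ i hi =>
    ⟨_, hcl γ hγ i _ ((hC hγ).update_of_forall_ne i hi), hammingDist_update_lt (hi i)⟩
  obtain ⟨i, hi⟩ := ne_iff.1 hne
  by_cases hused : ∃ j, γ j = β i
  swap
  · exact hfresh γ hγ i (not_exists.1 hused)
  -- first move the coordinate `j` carrying the letter `β i` to a letter unused by `γ`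
  obtain ⟨j, hj⟩ := hused
  have hji : j ≠ i := by
    rintro rfl
    exact hi hj
  have hjβ : γ j ≠ β j := fun h => hji (hβ (h.symm.trans hj))
  obtain ⟨c, hc⟩ := exists_forall_ne_of_card_lt hmq γ
  have hγ₁ : update γ j c ∈ C := hcl γ hγ j c ((hC hγ).update_of_forall_ne j hc)
  have hβi : ∀ k, update γ j c k ≠ β i := by
    intro k
    rcases eq_or_ne k j with rfl | hk
    · simpa [← hj] using (hc k).symm
    · simpa [update_of_ne hk, ← hj] using fun h => hk ((hC hγ) h)
  obtain ⟨γ₂, hγ₂, hlt⟩ := hfresh _ hγ₁ i hβi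
  exact ⟨γ₂, hγ₂, hlt.trans_le (hammingDist_update_le hjβ c)⟩

end HammingSteps

section TwoLetters

variable {I : Type*} [Fintype I] {q : ℕ}

/-- `wCodeGen (2p+1) q` for an arbitrary coordinate type. -/
def wSet (I : Type*) [Fintype I] (q p : ℕ) : Set (I → Fin q) :=
  {β | ∃ a b, a ≠ b ∧ cnt β a = p + 1 ∧ cnt β b = p}

theorem mem_wSet_iff {β : I → Fin q} {p : ℕ} :
    β ∈ wSet I q p ↔ 0 < letterProfile β (p + 1) ∧ 0 < letterProfile β p := by
  simp only [wSet, Set.mem_ofPred_eq, letterProfile_pos_iff]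
  constructor
  · rintro ⟨a, b, -, ha, hb⟩
    exact ⟨⟨a, ha⟩, b, hb⟩
  · rintro ⟨⟨a, ha⟩, b, hb⟩
    exact ⟨a, b, fun h => by subst h; omega, ha, hb⟩

theorem wCodeGen_eq {m p : ℕ} (hm : m = 2 * p + 1) : wCodeGen m q = wSet (Fin m) q p := by
  subst hm
  ext β
  simp only [wCodeGen, wSet, Set.mem_ofPred_eq]
  rw [show (2 * p + 1 + 1) / 2 = p + 1 by omega, show (2 * p + 1 - 1) / 2 = p by omega]

variable [DecidableEq I]

theorem wSet_subset {C : Set (I → Fin 2)} {p : ℕ} {γ₀ : I → Fin 2} (h₀ : γ₀ ∈ C)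
    (hC : C ⊆ wSet I 2 p) (hcl : ∀ γ ∈ C, ∀ i b, update γ i b ∈ wSet I 2 p → update γ i b ∈ C) :
    wSet I 2 p ⊆ C := by
  refine subset_of_exists_hammingDist_lt h₀ fun γ hγ β hβ hne => ?_
  obtain ⟨a, b, hab, ha, hb⟩ := hC hγ
  obtain ⟨a', b', hab', ha', hb'⟩ := hβ
  have hβa : cnt β a ≤ cnt γ a := by
    rcases (by omega : a = a' ∨ a = b') with rfl | rfl <;> omega
  obtain ⟨i, hi, hγi⟩ : ∃ i, γ i ≠ β i ∧ γ i = a := by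
    obtain ⟨k, hk⟩ := ne_iff.1 hne
    rcases (by omega : γ k = a ∨ γ k = b) with h | h
    · exact ⟨k, hk, h⟩
    · exact exists_ne_apply_eq_of_cnt_le hβa hk (by omega)
  have hβi : β i = b := by omega
  have hupd := cnt_update_add γ i (β i)
  refine ⟨_, hcl γ hγ i (β i) ⟨b, a, hab.symm, ?_, ?_⟩, hammingDist_update_lt hi⟩
  · have := hupd b
    grind
  · have := hupd a
    grind

end TwoLetters

section Orbits

variable {I : Type*} {q : ℕ} {X : Subgroup (Perm (I → Fin q))} {S : Set (I → Fin q)}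
  {α β : I → Fin q}

theorem IsOrbitOf.nonempty (hS : IsOrbitOf X S) : S.Nonempty := by
  obtain ⟨v, rfl⟩ := hS
  exact ⟨v, 1, X.one_mem, rfl⟩

theorem IsOrbitOf.exists_apply_eq (hS : IsOrbitOf X S) (hα : α ∈ S) (hβ : β ∈ S) :
    ∃ x ∈ X, x α = β := by
  obtain ⟨v, rfl⟩ := hS
  obtain ⟨x, hx, rfl⟩ := hα
  obtain ⟨y, hy, rfl⟩ := hβ
  exact ⟨y * x⁻¹, X.mul_mem hy (X.inv_mem hx), by simp⟩

theorem IsOrbitOf.apply_mem (hS : IsOrbitOf X S) (hα : α ∈ S) {x : Perm (I → Fin q)}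
    (hx : x ∈ X) : x α ∈ S := by
  obtain ⟨v, rfl⟩ := hS
  obtain ⟨y, hy, rfl⟩ := hα
  exact ⟨x * y, X.mul_mem hx hy, rfl⟩

theorem IsOrbitOf.mem_of_apply_mem (hS : IsOrbitOf X S) {x : Perm (I → Fin q)} (hx : x ∈ X)
    (h : x α ∈ S) : α ∈ S := by
  simpa using hS.apply_mem h (X.inv_mem hx)

variable [Fintype I] [DecidableEq I]

theorem diagLHom_apply (g : Perm (Fin q) × Perm I) (α : I → Fin q) (i : I) :
    diagLHom I q g α i = g.1 (α (g.2⁻¹ i)) := rfl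

theorem IsOrbitOf.letterProfile_eq (hS : IsOrbitOf X S) (hX : X ≤ diagL I q) (hα : α ∈ S)
    (hβ : β ∈ S) : letterProfile α = letterProfile β := by
  obtain ⟨x, hx, rfl⟩ := hS.exists_apply_eq hα hβ
  obtain ⟨g, rfl⟩ := hX hx
  exact (letterProfile_diagLHom g α).symm

end Orbits

section CellOne

variable {I : Type*} [Fintype I] [DecidableEq I] {q : ℕ} {C : Set (I → Fin q)}
  {α : I → Fin q} {i : I} {b : Fin q}

theorem hammingDist_update_self (hb : b ≠ α i) : hammingDist (update α i b) α = 1 := by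
  refine card_eq_one.2 ⟨i, ext fun j => ?_⟩
  rcases eq_or_ne j i with rfl | hj <;> simp_all [update_of_ne]

theorem update_mem_cell_one (hα : α ∈ C) (hb : b ≠ α i) (hν : update α i b ∉ C) :
    update α i b ∈ cell C 1 := by
  have hmem : 1 ∈ {d | ∃ β ∈ C, hammingDist (update α i b) β = d} :=
    ⟨α, hα, hammingDist_update_self hb⟩
  refine le_antisymm (Nat.sInf_le hmem) (Nat.one_le_iff_ne_zero.2 fun h0 => ?_)
  rcases Nat.sInf_eq_zero.1 h0 with ⟨β, hβ, hd⟩ | hempty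
  · exact hν (hammingDist_eq_zero.1 hd ▸ hβ)
  · rw [hempty] at hmem
    exact hmem

end CellOne

namespace DiagNbrTransitive

variable {I : Type*} [Fintype I] [DecidableEq I] {q : ℕ} {X : Subgroup (Perm (I → Fin q))}
  {C P : Set (I → Fin q)} {α β γ ν : I → Fin q} {i j : I} {b c : Fin q}

theorem isOrbitOf (hC : DiagNbrTransitive X C) : IsOrbitOf X C := hC.1.2.1

theorem isOrbitOf_cell_one (hC : DiagNbrTransitive X C) : IsOrbitOf X (cell C 1) := hC.1.2.2

theorem letterProfile_eq (hC : DiagNbrTransitive X C) (hα : α ∈ C) (hβ : β ∈ C) :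
    letterProfile α = letterProfile β :=
  hC.isOrbitOf.letterProfile_eq hC.2 hα hβ

theorem update_mem_cell_one_of_letterProfile_ne (hC : DiagNbrTransitive X C) (hα : α ∈ C)
    (h : letterProfile (update α i b) ≠ letterProfile α) : update α i b ∈ cell C 1 := by
  have hb : b ≠ α i := by
    rintro rfl
    exact h (by rw [update_eq_self])
  exact update_mem_cell_one hα hb fun hmem => h (hC.letterProfile_eq hmem hα)

theorem letterProfile_update_eq (hC : DiagNbrTransitive X C) (hα : α ∈ C)
    (h₁ : letterProfile (update α i b) ≠ letterProfile α)
    (h₂ : letterProfile (update α j c) ≠ letterProfile α) :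
    letterProfile (update α i b) = letterProfile (update α j c) :=
  hC.isOrbitOf_cell_one.letterProfile_eq hC.2 (hC.update_mem_cell_one_of_letterProfile_ne hα h₁)
    (hC.update_mem_cell_one_of_letterProfile_ne hα h₂)

theorem update_mem (hC : DiagNbrTransitive X C) (hγ : γ ∈ C) (hν : ν ∈ cell C 1)
    (h : letterProfile (update γ i b) ≠ letterProfile ν) : update γ i b ∈ C := by
  by_cases hb : b = γ i
  · rwa [hb, update_eq_self]
  by_contra hnot
  exact h (hC.isOrbitOf_cell_one.letterProfile_eq hC.2 (update_mem_cell_one hγ hb hnot) hν)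

theorem subset_of_letterProfile (hC : DiagNbrTransitive X C)
    (hP : ∀ β γ, letterProfile β = letterProfile γ → β ∈ P → γ ∈ P) (hα : α ∈ C) (hαP : α ∈ P) :
    C ⊆ P :=
  fun _ hβ => hP _ _ (hC.letterProfile_eq hα hβ) hαP

theorem update_mem_of_mem (hC : DiagNbrTransitive X C)
    (hP : ∀ β γ, letterProfile β = letterProfile γ → β ∈ P → γ ∈ P) (hα : α ∈ C) (hαP : α ∈ P)
    (hν : update α j c ∉ P) (hγ : γ ∈ C) (h : update γ i b ∈ P) : update γ i b ∈ C := by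
  have hne : letterProfile (update α j c) ≠ letterProfile α := fun e => hν (hP _ _ e.symm hαP)
  exact hC.update_mem hγ (hC.update_mem_cell_one_of_letterProfile_ne hα hne)
    fun e => hν (hP _ _ e h)

theorem eq_singleton_or_eq_repCode [Nontrivial I] (hC : DiagNbrTransitive X C) {a : Fin q}
    (ha : (fun _ => a) ∈ C) : C = {fun _ => a} ∨ C = repCode I q := by
  have hrep : C ⊆ repCode I q := fun β hβ => by
    obtain ⟨x, hx, rfl⟩ := hC.isOrbitOf.exists_apply_eq ha hβ
    obtain ⟨⟨h, σ⟩, rfl⟩ := hC.2 hx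
    exact ⟨h a, rfl⟩
  by_cases hsing : ∀ β ∈ C, β = fun _ => a
  · exact Or.inl (Set.eq_singleton_iff_unique_mem.2 ⟨ha, hsing⟩)
  obtain ⟨_, ha₁, hne⟩ := not_forall₂.1 hsing
  obtain ⟨a₁, rfl⟩ := hrep ha₁
  obtain ⟨i, j, hij⟩ := exists_pair_ne I
  have hcell : ∀ t ≠ a, update (fun _ : I => a) i t ∈ cell C 1 := fun t ht =>
    update_mem_cell_one ha ht fun hmem => by
      obtain ⟨c, hc⟩ := hrep hmem
      have hi := congrFun hc i
      have hj := congrFun hc j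
      simp only [update_self, update_of_ne hij.symm] at hi hj
      exact ht (hi.trans hj.symm)
  refine Or.inr (hrep.antisymm ?_)
  rintro _ ⟨t, rfl⟩
  rcases eq_or_ne t a with rfl | ht
  · exact ha
  obtain ⟨x, hx, hxt⟩ := hC.isOrbitOf_cell_one.exists_apply_eq (hcell t ht)
    (hcell a₁ fun e => hne (e ▸ rfl))
  obtain ⟨⟨h, σ⟩, rfl⟩ := hC.2 hx
  -- `x` maps the constant word `t` to the constant word `h t ∈ {a₁, a}`
  have hht : h t = update (fun _ : I => a) i a₁ (σ i) := by
    simpa [diagLHom_apply] using congrFun hxt (σ i)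
  refine hC.isOrbitOf.mem_of_apply_mem hx ?_
  show (fun _ => h t) ∈ C
  rw [hht, update_apply]
  split_ifs
  exacts [ha₁, ha]

theorem cnt_le_cnt_add_one (hC : DiagNbrTransitive X C) (hα : α ∈ C) {c d : Fin q}
    (hc : 0 < cnt α c) (hd : 0 < cnt α d) : cnt α c ≤ cnt α d + 1 := by
  by_contra! hlt
  obtain ⟨i, rfl⟩ := cnt_pos_iff.1 hc
  obtain ⟨j, rfl⟩ := cnt_pos_iff.1 hd
  have hij : α j ≠ α i := fun h => by rw [h] at hlt; omega
  -- both moves between `α i` and `α j` lose a letter of multiplicity `cnt α (α i)`,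
  -- but only the move from `α j` to `α i` creates one of multiplicity `cnt α (α i) + 1`
  have e₁ := letterProfile_update hij
  have e₂ := letterProfile_update hij.symm
  have ne₁ : letterProfile (update α i (α j)) ≠ letterProfile α :=
    ne_iff.2 ⟨cnt α (α i), by have := e₁ (cnt α (α i)); grind⟩
  have ne₂ : letterProfile (update α j (α i)) ≠ letterProfile α :=
    ne_iff.2 ⟨cnt α (α i), by have := e₂ (cnt α (α i)); grind⟩
  have h₁ := e₁ (cnt α (α i) + 1)
  have h₂ := e₂ (cnt α (α i) + 1)
  rw [congrFun (hC.letterProfile_update_eq hα ne₁ ne₂)] at h₁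
  grind

theorem cnt_pos_of_two_le_cnt (hC : DiagNbrTransitive X C) (hα : α ∈ C) {i j : I}
    (hij : α j ≠ α i) (hle : cnt α (α j) ≤ cnt α (α i)) (h2 : 2 ≤ cnt α (α i)) (z : Fin q) :
    0 < cnt α z := by
  by_contra! hz
  have hzi : z ≠ α i := by rintro rfl; omega
  -- moving `α j` to `α i` creates a letter of multiplicity `cnt α (α i) + 1`,
  -- moving `α i` to the missing letter `z` changes the profile without creating one
  have e₁ := letterProfile_update hij.symm
  have e₂ := letterProfile_update hzi
  have ne₁ : letterProfile (update α j (α i)) ≠ letterProfile α :=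
    ne_iff.2 ⟨cnt α (α i) + 1, by have := e₁ (cnt α (α i) + 1); grind⟩
  have ne₂ : letterProfile (update α i z) ≠ letterProfile α :=
    ne_iff.2 ⟨1, by have := e₂ 1; grind⟩
  have h₁ := e₁ (cnt α (α i) + 1)
  have h₂ := e₂ (cnt α (α i) + 1)
  rw [congrFun (hC.letterProfile_update_eq hα ne₁ ne₂)] at h₁
  grind

theorem exists_cnt_eq_or_eq_succ (hC : DiagNbrTransitive X C) (hα : α ∈ C)
    (hconst : ¬∃ a, α = fun _ => a) (hinj : ¬Injective α) :
    ∃ p, 0 < p ∧ ∀ c, cnt α c = p ∨ cnt α c = p + 1 := by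
  obtain ⟨a, ha⟩ := not_forall.1 (mt injective_iff_cnt_le_one.2 hinj)
  have : Nonempty (Fin q) := ⟨a⟩
  obtain ⟨c, hmax⟩ := Finite.exists_max (cnt α)
  have h2 : 2 ≤ cnt α c := (by omega : 2 ≤ cnt α a).trans (hmax a)
  obtain ⟨i, rfl⟩ := cnt_pos_iff.1 (by omega : 0 < cnt α c)
  obtain ⟨j, hj⟩ : ∃ j, α j ≠ α i := by
    by_contra! h
    exact hconst ⟨α i, funext h⟩
  have hpos := hC.cnt_pos_of_two_le_cnt hα hj (hmax _) h2
  refine ⟨cnt α (α i) - 1, by omega, fun c => ?_⟩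
  have := hC.cnt_le_cnt_add_one hα (hpos (α i)) (hpos c)
  have := hmax c
  omega

theorem cnt_eq_of_forall_cnt_eq (hC : DiagNbrTransitive X C) (hα : α ∈ C) {p : ℕ}
    (hp : ∀ a, cnt α a = p) {β : I → Fin q} (hβ : β ∈ C) (a : Fin q) : cnt β a = p := by
  have h : letterProfile β p = #(univ : Finset (Fin q)) := by
    rw [← hC.letterProfile_eq hα hβ, letterProfile, filter_true_of_mem fun a _ => hp a]
  exact card_filter_eq_iff.1 h a (mem_univ a)

theorem eq_injCode [Nontrivial I] (hC : DiagNbrTransitive X C) (hα : α ∈ C)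
    (hinj : Injective α) (hmq : Fintype.card I < q) : C = injCode I q := by
  have hP : ∀ β γ : I → Fin q, letterProfile β = letterProfile γ →
      β ∈ injCode I q → γ ∈ injCode I q := fun β γ h => by
    simp only [injCode, Set.mem_ofPred_eq, injective_iff_letterProfile, h, imp_self]
  obtain ⟨i, j, hij⟩ := exists_pair_ne I
  have hν : update α i (α j) ∉ injCode I q := fun h => hij (h (by simp [update_of_ne hij.symm]))
  have hCP := hC.subset_of_letterProfile hP hα hinj
  exact hCP.antisymm
    (injCode_subset hmq hα hCP fun γ hγ k b => hC.update_mem_of_mem hP hα hinj hν hγ)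

theorem eq_or_eq_of_cnt_eq_succ (hC : DiagNbrTransitive X C) (hα : α ∈ C) {p : ℕ} (hp : 0 < p)
    (hcnt : ∀ c, cnt α c = p ∨ cnt α c = p + 1) {A B : Fin q} (hA : cnt α A = p + 1)
    (hB : cnt α B = p) (c : Fin q) : c = A ∨ c = B := by
  obtain ⟨iA, rfl⟩ := cnt_pos_iff.1 (by omega : 0 < cnt α A)
  obtain ⟨iB, rfl⟩ := cnt_pos_iff.1 (by omega : 0 < cnt α B)
  have hAB : α iA ≠ α iB := fun h => by rw [h] at hA; omega
  -- compare moving `B` to `A` (multiplicities `p, p + 1` become `p - 1, p + 2`) with moving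
  -- to a third letter `c` from `B` (`p, p` become `p - 1, p + 1`) or from `A`
  have e₁ := letterProfile_update hAB
  have ne₁ : letterProfile (update α iB (α iA)) ≠ letterProfile α :=
    ne_iff.2 ⟨p + 2, by have := e₁ (p + 2); grind⟩
  by_contra! hc
  rcases hcnt c with hcp | hcp
  · have e₂ := letterProfile_update (i := iB) hc.2
    have ne₂ : letterProfile (update α iB c) ≠ letterProfile α :=
      ne_iff.2 ⟨p - 1, by have := e₂ (p - 1); grind⟩
    have h₁ := e₁ (p + 2)
    have h₂ := e₂ (p + 2)
    rw [congrFun (hC.letterProfile_update_eq hα ne₁ ne₂)] at h₁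
    grind
  · have e₂ := letterProfile_update (i := iA) hc.1
    have ne₂ : letterProfile (update α iA c) ≠ letterProfile α :=
      ne_iff.2 ⟨p + 2, by have := e₂ (p + 2); grind⟩
    have h₁ := e₁ (p - 1)
    have h₂ := e₂ (p - 1)
    rw [congrFun (hC.letterProfile_update_eq hα ne₁ ne₂)] at h₁
    grind

end DiagNbrTransitive

theorem DiagNbrTransitive.eq_wCodeGen {m q : ℕ} {X : Subgroup (Perm (Fin m → Fin q))}
    {C : Set (Fin m → Fin q)} (hC : DiagNbrTransitive X C) {α : Fin m → Fin q} (hα : α ∈ C)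
    {p : ℕ} (hp : 0 < p) (hcnt : ∀ c, cnt α c = p ∨ cnt α c = p + 1) {A B : Fin q}
    (hA : cnt α A = p + 1) (hB : cnt α B = p) : q = 2 ∧ m = 2 * p + 1 ∧ C = wCodeGen m q := by
  have hAB : A ≠ B := by
    rintro rfl
    omega
  have huniv : (univ : Finset (Fin q)) = {A, B} :=
    (eq_univ_of_forall fun c => by simpa using hC.eq_or_eq_of_cnt_eq_succ hα hp hcnt hA hB c).symm
  have hq : q = 2 := by simpa [card_pair hAB] using congrArg card huniv
  have hm : m = 2 * p + 1 := by
    have := sum_cnt α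
    rw [huniv, sum_pair hAB, hA, hB, Fintype.card_fin] at this
    omega
  subst hq
  refine ⟨rfl, hm, ?_⟩
  rw [wCodeGen_eq hm]
  have hP : ∀ β γ : Fin m → Fin 2, letterProfile β = letterProfile γ →
      β ∈ wSet (Fin m) 2 p → γ ∈ wSet (Fin m) 2 p := fun β γ h => by
    simp only [mem_wSet_iff, h, imp_self]
  have hαW : α ∈ wSet (Fin m) 2 p := ⟨A, B, hAB, hA, hB⟩
  obtain ⟨iB, rfl⟩ := cnt_pos_iff.1 (hB ▸ hp)
  have hν : update α iB A ∉ wSet (Fin m) 2 p := by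
    rintro ⟨a, b, -, ha, -⟩
    have h₁ := cnt_update_add α iB A A
    have h₂ := cnt_update_add α iB A (α iB)
    rcases (by omega : a = A ∨ a = α iB) with rfl | rfl <;> grind
  have hCW := hC.subset_of_letterProfile hP hα hαW
  exact hCW.antisymm (wSet_subset hα hCW fun γ hγ k b => hC.update_mem_of_mem hP hα hαW hν hγ)

section ConstantComposition

variable {I : Type*} [Fintype I] {q : ℕ} {C : Set (I → Fin q)} {β γ : I → Fin q}

theorem IsCCC.cnt_pos (h : IsCCC C) (hβ : β ∈ C) (a : Fin q) : 0 < cnt β a := by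
  obtain ⟨-, f, hf, hβf⟩ := h
  exact hβf β hβ a ▸ hf a

theorem IsCCC.cnt_eq (h : IsCCC C) (hβ : β ∈ C) (hγ : γ ∈ C) (a : Fin q) :
    cnt β a = cnt γ a := by
  obtain ⟨-, f, -, hf⟩ := h
  rw [hf β hβ, hf γ hγ]

theorem not_isCCC_injCode [DecidableEq I] (hmq : Fintype.card I < q) : ¬IsCCC (injCode I q) :=
  fun h => by
    obtain ⟨β, hβ⟩ := h.1
    obtain ⟨c, hc⟩ := exists_forall_ne_of_card_lt hmq β
    obtain ⟨i, hi⟩ := cnt_pos_iff.1 (h.cnt_pos hβ c)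
    exact hc i hi

theorem not_isCCC_repCode [DecidableEq I] [Nonempty I] (hq : 2 ≤ q) : ¬IsCCC (repCode I q) :=
  fun h => by
    obtain ⟨i, hi⟩ := cnt_pos_iff.1 (h.cnt_pos (β := fun _ => ⟨0, by omega⟩) ⟨_, rfl⟩ ⟨1, hq⟩)
    simp [Fin.ext_iff] at hi

theorem not_isCCC_wCodeGen {m : ℕ} (hm : 0 < m) : ¬IsCCC (wCodeGen m q) := fun h => by
  obtain ⟨β, a, b, hab, ha, hb⟩ := h.1
  have hswap : Equiv.swap a b ∘ β ∈ wCodeGen m q :=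
    ⟨b, a, hab.symm, by simpa [cnt_perm_comp], by simpa [cnt_perm_comp]⟩
  have := h.cnt_eq hswap ⟨a, b, hab, ha, hb⟩ a
  rw [cnt_perm_comp, swap_inv, swap_apply_left] at this
  omega

end ConstantComposition

/-- Theorem 1.2: a diagonally neighbour transitive code in `H(m,q)` is
either a frequency permutation array, or a single constant word `{(a,…,a)}`, or one of
`Rep(m,q)`, `Inj(m,q)` (with `m < q`), `W([m/2],2)` (with `q = 2`, `m ≥ 3` odd), none of
which is a constant composition code. -/
theorem diag_neighbour_transitive_fpa {m q : ℕ} (hm : 2 ≤ m) (hq : 2 ≤ q)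
    (C : Set (Fin m → Fin q))
    (hX : ∃ X : Subgroup (Equiv.Perm (Fin m → Fin q)), DiagNbrTransitive X C) :
    (∃ p : ℕ, 0 < p ∧ m = p * q ∧ ∀ β ∈ C, ∀ a : Fin q, cnt β a = p) ∨
    (∃ a : Fin q, C = {fun _ => a}) ∨
    ((C = repCode (Fin m) q ∨
      (m < q ∧ C = injCode (Fin m) q) ∨
      (q = 2 ∧ 3 ≤ m ∧ Odd m ∧ C = wCodeGen m q)) ∧
     ¬ IsCCC C) := by
  obtain ⟨X, hC⟩ := hX
  have : Nontrivial (Fin m) := Fin.nontrivial_iff_two_le.2 hm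
  obtain ⟨α, hα⟩ := hC.isOrbitOf.nonempty
  by_cases hconst : ∃ a, α = fun _ => a
  · obtain ⟨a, rfl⟩ := hconst
    exact Or.inr ((hC.eq_singleton_or_eq_repCode hα).imp (⟨a, ·⟩)
      fun h => ⟨Or.inl h, h ▸ not_isCCC_repCode hq⟩)
  by_cases hflat : ∃ p, ∀ a, cnt α a = p
  · obtain ⟨p, hp⟩ := hflat
    have hmp : m = p * q := by simpa [hp, mul_comm] using (sum_cnt α).symm
    refine Or.inl ⟨p, Nat.pos_of_ne_zero ?_, hmp, fun β hβ => hC.cnt_eq_of_forall_cnt_eq hα hp hβ⟩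
    rintro rfl
    omega
  simp only [not_exists, not_forall] at hflat
  refine Or.inr (Or.inr ?_)
  by_cases hinj : Injective α
  · obtain ⟨z, hz⟩ := hflat 1
    have hmq := card_lt_of_injective_of_cnt_ne_one hinj hz
    have hI := hC.eq_injCode hα hinj hmq
    exact ⟨Or.inr (Or.inl ⟨by simpa using hmq, hI⟩), hI ▸ not_isCCC_injCode hmq⟩
  · obtain ⟨p, hp, hcnt⟩ := hC.exists_cnt_eq_or_eq_succ hα hconst hinj
    obtain ⟨A, hA⟩ := hflat p
    obtain ⟨B, hB⟩ := hflat (p + 1)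
    obtain ⟨hq2, hmp, hW⟩ := hC.eq_wCodeGen hα hp hcnt ((hcnt A).resolve_left hA)
      ((hcnt B).resolve_right hB)
    exact ⟨Or.inr (Or.inr ⟨hq2, by omega, ⟨p, hmp⟩, hW⟩), hW ▸ not_isCCC_wCodeGen (by omega)⟩
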